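/- For all n > 0 and all k with 0 < k < n, the first and the last string of the list C'(n,k) agree at every position except positions k and n: the first string has the symbol 1 at position k and the marked zero 0_{n-k-1} at position n, while the last string has the marked zero 0_{n-k-1} at position k and the symbol 1 at position n. -/
import Mathlib


/-- Symbols of the strings in the list `C'(n,k)`: the symbol `1` together with
marked zeros `0_i` for `i : ℕ`. -/
inductive MSym : Type
  | one : MSym
  | zero : ℕ → MSym
  deriving DecidableEq, Repr

/-- Decrease the index of every marked zero by `1` modulo `m`; fix the symbol `1`. -/
def MSym.decIdx (m : ℕ) : MSym → MSym
  | .one => .one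
  | .zero i => .zero ((i + m - 1) % m)

/-- The recursively defined list `C'(n,k)` of strings of length `n` over the alphabet of
the symbol `1` and marked zeros:  `C'(n,0) = [0_0 0_1 ⋯ 0_{n-1}]`, `C'(n,n) = [1^n]`, and
for `0 < k < n`, `C'(n,k)` is `C'(n-1,k)` with `0_{n-k-1}` appended to each string,
followed by the reversal of `C'(n-1,k-1)` with every marked-zero index decreased by `1`
modulo `n-k` and the symbol `1` appended to each string. -/
def C' : ℕ → ℕ → List (List MSym)
  | n, 0 => [(List.range n).map MSym.zero]
  | 0, _ + 1 => []
  | n + 1, k + 1 =>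
      if n = k then [List.replicate (n + 1) MSym.one]
      else
        ((C' n (k + 1)).map fun w => w ++ [MSym.zero (n - k - 1)]) ++
          ((C' n k).reverse.map fun w => w.map (MSym.decIdx (n - k)) ++ [MSym.one])

lemma C'_head (n k : ℕ) (h : k ≤ n) :
    (C' n k).head? = some (List.replicate k MSym.one ++ (List.range (n - k)).map MSym.zero) := by
  induction n generalizing k with
  | zero => interval_cases k; simp [C']
  | succ m ih =>
    match k with
    | 0 => simp [C']
    | j + 1 =>
      rw [C']
      by_cases hm : m = j
      · subst hm
        simp
      · have hj : j + 1 ≤ m := by omega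
        rw [if_neg hm]
        have hh := ih (j + 1) hj
        cases hC : C' m (j + 1) with
        | nil => simp [hC] at hh
        | cons a t =>
          rw [hC] at hh
          simp only [List.head?_cons, Option.some.injEq] at hh
          subst hh
          have h1 : m + 1 - (j + 1) = (m - (j + 1)) + 1 := by omega
          have h2 : m - (j + 1) = m - j - 1 := by omega
          simp [h1, h2, List.range_succ]

lemma decIdx_range (d : ℕ) :
    ((List.range (d + 1)).map MSym.zero).map (MSym.decIdx (d + 1)) =
      MSym.zero d :: (List.range d).map MSym.zero := by
  rw [List.range_succ_eq_map]
  simp only [List.map_cons, List.map_map]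
  congr 1
  · show MSym.zero ((0 + (d + 1) - 1) % (d + 1)) = MSym.zero d
    congr 1
    have : 0 + (d + 1) - 1 = d := by omega
    rw [this, Nat.mod_eq_of_lt (by omega)]
  · apply List.map_congr_left
    intro x hx
    simp only [List.mem_range] at hx
    show MSym.zero ((x + 1 + (d + 1) - 1) % (d + 1)) = MSym.zero x
    congr 1
    have : x + 1 + (d + 1) - 1 = x + (d + 1) := by omega
    rw [this, Nat.add_mod_right, Nat.mod_eq_of_lt (by omega)]

lemma C'_last (n k : ℕ) (h0 : 0 < k) (h1 : k < n) :
    (C' n k).getLast? = some (List.replicate (k - 1) MSym.one ++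
      MSym.zero (n - k - 1) :: ((List.range (n - k - 1)).map MSym.zero ++ [MSym.one])) := by
  obtain ⟨m, rfl⟩ : ∃ m, n = m + 1 := ⟨n - 1, by omega⟩
  obtain ⟨j, rfl⟩ : ∃ j, k = j + 1 := ⟨k - 1, by omega⟩
  rw [C', if_neg (by omega)]
  have hh := C'_head m j (by omega)
  cases hC : C' m j with
  | nil => simp [hC] at hh
  | cons a t =>
    rw [hC] at hh
    simp only [List.head?_cons, Option.some.injEq] at hh
    subst hh
    rw [List.getLast?_append]
    simp only [List.reverse_cons, List.map_append, List.map_cons, List.map_nil]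
    rw [List.getLast?_append]
    have hd : ∃ d, m - j = d + 1 := ⟨m - j - 1, by omega⟩
    obtain ⟨d, hd⟩ := hd
    have h2 : m + 1 - (j + 1) - 1 = d := by omega
    simp only [List.map_append, hd, decIdx_range, h2]
    have : ∀ (x : List MSym), (List.replicate j MSym.one).map (MSym.decIdx (d+1)) = List.replicate j MSym.one := by
      intro x
      simp [List.map_replicate, MSym.decIdx]
    simp [this, List.getLast?_concat]
    right; rfl

/-- For all `n > 0` and `0 < k < n`, the first and last strings of `C'(n,k)` agree at
every position except positions `k` and `n` (positions numbered `1, …, n`, so indices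
`k-1` and `n-1` here): the first has `1` at position `k` and `0_{n-k-1}` at position `n`,
the last has `0_{n-k-1}` at position `k` and `1` at position `n`. -/
theorem stmt3 (n k : ℕ) (h0 : 0 < k) (h1 : k < n) (w w' : List MSym)
    (hw : (C' n k).head? = some w) (hw' : (C' n k).getLast? = some w') :
    w[k - 1]? = some MSym.one ∧
    w[n - 1]? = some (MSym.zero (n - k - 1)) ∧
    w'[k - 1]? = some (MSym.zero (n - k - 1)) ∧
    w'[n - 1]? = some MSym.one ∧
    ∀ r < n, r ≠ k - 1 → r ≠ n - 1 → w[r]? = w'[r]? := by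
  rw [C'_head n k h1.le] at hw
  rw [C'_last n k h0 h1] at hw'
  injection hw with hw
  injection hw' with hw'
  subst hw hw'
  have hgw : ∀ r, (List.replicate k MSym.one ++ (List.range (n - k)).map MSym.zero)[r]? =
      if r < k then some MSym.one else if r < n then some (MSym.zero (r - k)) else none := by
    intro r
    by_cases h : r < k
    · rw [List.getElem?_append_left (by simpa), List.getElem?_replicate, if_pos h, if_pos h]
    · rw [List.getElem?_append_right (by simpa using le_of_not_gt h), if_neg h]
      simp only [List.length_replicate, List.getElem?_map]
      by_cases h2 : r < n
      · rw [List.getElem?_range (by omega), if_pos h2]; rfl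
      · rw [if_neg h2, List.getElem?_eq_none (by simp; omega)]; rfl
  have hgw' : ∀ r, (List.replicate (k-1) MSym.one ++
      MSym.zero (n - k - 1) :: ((List.range (n - k - 1)).map MSym.zero ++ [MSym.one]))[r]? =
      if r < k - 1 then some MSym.one else if r = k - 1 then some (MSym.zero (n - k - 1))
      else if r < n - 1 then some (MSym.zero (r - k)) else if r = n - 1 then some MSym.one
      else none := by
    intro r
    by_cases h : r < k - 1
    · rw [List.getElem?_append_left (by simpa), List.getElem?_replicate, if_pos h, if_pos h]
    · rw [List.getElem?_append_right (by simpa using le_of_not_gt h), if_neg h]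
      simp only [List.length_replicate]
      by_cases h2 : r = k - 1
      · rw [if_pos h2]
        have : r - (k - 1) = 0 := by omega
        rw [this, List.getElem?_cons_zero]
      · rw [if_neg h2]
        have : ∃ d, r - (k - 1) = d + 1 := ⟨r - (k-1) - 1, by omega⟩
        obtain ⟨d, hd⟩ := this
        rw [hd]
        simp only [List.getElem?_cons_succ]
        by_cases h3 : r < n - 1
        · rw [if_pos h3, List.getElem?_append_left (by simp; omega), List.getElem?_map,
            List.getElem?_range (by omega)]
          have : d = r - k := by omega
          rw [this]; rfl
        · rw [if_neg h3, List.getElem?_append_right (by simp; omega)]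
          simp only [List.length_map, List.length_range]
          by_cases h4 : r = n - 1
          · rw [if_pos h4]
            have : d - (n - k - 1) = 0 := by omega
            rw [this]; rfl
          · rw [if_neg h4]
            have : ∃ e, d - (n - k - 1) = e + 1 := ⟨d - (n-k-1) - 1, by omega⟩
            obtain ⟨e, he⟩ := this
            rw [he]; rfl
  refine ⟨?_, ?_, ?_, ?_, ?_⟩
  · rw [hgw]; simp only [if_pos (by omega : k - 1 < k)]
  · rw [hgw]
    rw [if_neg (by omega), if_pos (by omega)]
    congr 2; omega
  · rw [hgw']
    rw [if_neg (by omega), if_pos rfl]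
  · rw [hgw']
    rw [if_neg (by omega)]
    by_cases h : n - 1 = k - 1
    · omega
    · rw [if_neg h, if_neg (by omega), if_pos rfl]
  · intro r hr hrk hrn
    rw [hgw, hgw']
    by_cases h : r < k - 1
    · rw [if_pos (by omega), if_pos h]
    · rw [if_neg (by omega : ¬ r < k), if_neg h, if_neg hrk, if_pos (by omega), if_pos (by omega)]
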